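/- In any Gauss word, the number of odd-parity letters is even, where a letter A of a Gauss word of the form xAyAz has odd parity if the word y has odd length. -/

import Mathlib

/-- A word is a finite sequence of letters; we take the letters to be natural numbers. -/
abbrev Word := List ℕ

/-- An `n`-component phrase: an `n`-tuple of words. -/
abbrev Phrase (n : ℕ) := Fin n → Word

/-- The concatenation of all the components of a phrase. -/
def totalWord {n : ℕ} (p : Phrase n) : Word := (List.ofFn p).flatten

/-- A Gauss word: every letter that appears does so exactly twice. -/
def IsGaussWord (w : Word) : Prop := ∀ a ∈ w, w.count a = 2

/-- A Gauss phrase: the concatenation of the components is a Gauss word. -/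
def IsGaussPhrase {n : ℕ} (p : Phrase n) : Prop := IsGaussWord (totalWord p)

/-- The phrase written as a single word with separators (`none`) between components. -/
def sepWord {n : ℕ} (p : Phrase n) : List (Option ℕ) :=
  List.intercalate [none] (List.ofFn fun i => (p i).map some)

/-- A single open homotopy move: isomorphism, H1, H2 or H3.  Adjacency of two letters
in `sepWord p` means exactly that they are adjacent inside a single component. -/
inductive OpenMove {n : ℕ} : Phrase n → Phrase n → Prop
  | iso (p : Phrase n) (f : ℕ → ℕ) (hf : Function.Bijective f) :
      OpenMove p (fun i => (p i).map f)
  | h1 (p q : Phrase n) (A : ℕ) (x y : List (Option ℕ))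
      (hA : some A ∉ x ++ y)
      (hp : sepWord p = x ++ some A :: some A :: y)
      (hq : sepWord q = x ++ y) : OpenMove p q
  | h2 (p q : Phrase n) (A B : ℕ) (x y z : List (Option ℕ))
      (hAB : A ≠ B)
      (hA : some A ∉ x ++ y ++ z) (hB : some B ∉ x ++ y ++ z)
      (hp : sepWord p = x ++ some A :: some B :: (y ++ some B :: some A :: z))
      (hq : sepWord q = x ++ y ++ z) : OpenMove p q
  | h3 (p q : Phrase n) (A B C : ℕ) (w x y z : List (Option ℕ))
      (hAB : A ≠ B) (hAC : A ≠ C) (hBC : B ≠ C)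
      (hA : some A ∉ w ++ x ++ y ++ z) (hB : some B ∉ w ++ x ++ y ++ z)
      (hC : some C ∉ w ++ x ++ y ++ z)
      (hp : sepWord p =
        w ++ some A :: some B :: (x ++ some A :: some C :: (y ++ some B :: some C :: z)))
      (hq : sepWord q =
        w ++ some B :: some A :: (x ++ some C :: some A :: (y ++ some C :: some B :: z))) :
      OpenMove p q

/-- The shift move: move the first letter of a component to its end. -/
inductive ShiftMove {n : ℕ} : Phrase n → Phrase n → Prop
  | shift (p : Phrase n) (k : Fin n) (A : ℕ) (y : Word) (hp : p k = A :: y) :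
      ShiftMove p (Function.update p k (y ++ [A]))

/-- Open homotopy: the equivalence relation generated by isomorphisms and the
moves H1, H2, H3 (and their inverses). -/
def OpenHomotopic {n : ℕ} (p q : Phrase n) : Prop :=
  Relation.EqvGen (@OpenMove n) p q

/-- Homotopy: the equivalence relation generated by isomorphisms, shift moves and the
moves H1, H2, H3 (and their inverses). -/
def Homotopic {n : ℕ} (p q : Phrase n) : Prop :=
  Relation.EqvGen (fun a b => OpenMove a b ∨ ShiftMove a b) p q

/-- The linking matrix of a phrase: the `(i,j)` entry, for `i ≠ j`, is the number
modulo 2 of (two-component) letters with one occurrence in component `i` and the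
other occurrence in component `j`; the diagonal entries are `0`. -/
def linkingMatrix {n : ℕ} (p : Phrase n) : Matrix (Fin n) (Fin n) (ZMod 2) :=
  Matrix.of fun i j =>
    if i = j then 0
    else (((totalWord p).toFinset.filter
        fun a => (p i).count a = 1 ∧ (p j).count a = 1).card : ZMod 2)

/-- The subword strictly between the two occurrences of the letter `a` in `w`
(for a letter occurring exactly twice in `w`). -/
def betweenWord (w : Word) (a : ℕ) : Word :=
  (w.drop (w.idxOf a + 1)).takeWhile fun b => b ≠ a

/-- Fukunaga's `T` invariant: `Tk p k` is the number, modulo 2, of odd-parity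
single-component letters in the `k`-th component of `p`. -/
def Tk {n : ℕ} (p : Phrase n) (k : Fin n) : ZMod 2 :=
  (((p k).toFinset.filter
      fun a => (p k).count a = 2 ∧ Odd (betweenWord (p k) a).length).card : ZMod 2)

/-- The linking vector of a subword `w` of the `k`-th component of `p`: the `i`-th entry
is the number modulo 2 of letters occurring exactly once in `w` whose other occurrence
lies in the `i`-th component of `p`. -/
def linkVec {n : ℕ} (p : Phrase n) (k : Fin n) (w : Word) : Fin n → ZMod 2 :=
  fun i =>
    ((w.toFinset.filter fun a => w.count a = 1 ∧
        (if i = k then (p k).count a = 2 else a ∈ p i)).card : ZMod 2)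

/-- The linking vector of a single-component letter `a` of the `k`-th component:
the linking vector of the word between its two occurrences. -/
def letterVec {n : ℕ} (p : Phrase n) (k : Fin n) (a : ℕ) : Fin n → ZMod 2 :=
  linkVec p k (betweenWord (p k) a)

/-- `Bk p k`: the set of nonzero vectors `v ∈ (ℤ/2)ⁿ` which are the linking vector of an
odd number of single-component letters of the `k`-th component of `p`. -/
def Bk {n : ℕ} (p : Phrase n) (k : Fin n) : Finset (Fin n → ZMod 2) :=
  Finset.univ.filter fun v => v ≠ 0 ∧
    Odd (((p k).toFinset.filter fun a => (p k).count a = 2 ∧ letterVec p k a = v).card)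

/-- `Ok p k`: the set of orbits of `(ℤ/2)ⁿ` under translation by the linking vector of the
`k`-th component, other than the orbit of `0`, which contain the linking vector of an odd
number of single-component letters of the `k`-th component.  An orbit is recorded as the
finite set of its elements. -/
def Ok {n : ℕ} (p : Phrase n) (k : Fin n) : Finset (Finset (Fin n → ZMod 2)) :=
  Finset.univ.filter fun O =>
    (∃ v : Fin n → ZMod 2, O = {v, v + linkVec p k (p k)}) ∧
    (0 : Fin n → ZMod 2) ∉ O ∧
    Odd (((p k).toFinset.filter fun a => (p k).count a = 2 ∧ letterVec p k a ∈ O).card)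

/-! Give the positions of a word the alternating signs `+1, -1, +1, …` and let the signed count
of a letter be the sum of the signs of its occurrences. For a letter with `w = xAyAz` this is
`±(1 - (-1) ^ |y|)`: `±2` if `A` has odd parity and `0` otherwise. The signed counts of all
letters add up to the alternating sum of `|w|` ones, which vanishes because a Gauss word has even
length. Since `2 = -2` modulo `4`, twice the number of odd-parity letters is divisible by `4`. -/

namespace List

variable {α : Type*} [DecidableEq α]

theorem exists_eq_append_cons_of_mem {l : List α} {a : α} (h : a ∈ l) :
    ∃ s t, l = s ++ a :: t ∧ a ∉ s := by
  induction l with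
  | nil => simp at h
  | cons b l ih =>
    by_cases hb : b = a
    · exact ⟨[], l, by rw [hb, nil_append], not_mem_nil⟩
    · obtain ⟨s, t, rfl, hs⟩ := ih ((mem_cons.1 h).resolve_left (Ne.symm hb))
      exact ⟨b :: s, t, rfl, by simp [hs, Ne.symm hb]⟩

theorem exists_eq_append_cons_append_cons_of_count_eq_two {l : List α} {a : α}
    (h : l.count a = 2) : ∃ x y z, l = x ++ a :: (y ++ a :: z) ∧ a ∉ x ∧ a ∉ y ∧ a ∉ z := by
  obtain ⟨x, t, rfl, hx⟩ :=
    exists_eq_append_cons_of_mem (count_pos_iff.1 (by omega : 0 < l.count a))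
  have ht : t.count a = 1 := by simpa [count_append, count_eq_zero.2 hx] using h
  obtain ⟨y, z, rfl, hy⟩ :=
    exists_eq_append_cons_of_mem (count_pos_iff.1 (by omega : 0 < t.count a))
  have hz : z.count a = 0 := by simpa [count_append, count_eq_zero.2 hy] using ht
  exact ⟨x, y, z, rfl, hx, hy, count_eq_zero.1 hz⟩

end List

theorem betweenWord_append_cons_append_cons {x y z : Word} {a : ℕ} (hx : a ∉ x) (hy : a ∉ y) :
    betweenWord (x ++ a :: (y ++ a :: z)) a = y := by
  simp only [betweenWord, List.idxOf_append_of_notMem hx, List.idxOf_cons_self, add_zero]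
  rw [List.append_cons x, show x.length + 1 = (x ++ [a]).length by simp, List.drop_left,
    List.takeWhile_append_of_pos (by simpa using fun b hb => ne_of_mem_of_not_mem hb hy)]
  simp

section SignedCount

variable (R : Type*) [CommRing R] {α : Type*} [DecidableEq α]

def signedCount (a : α) (w : List α) : R :=
  (w.map fun b => if b = a then 1 else 0).alternatingSum

variable {R}

theorem signedCount_cons (a b : α) (w : List α) :
    signedCount R a (b :: w) = (if b = a then 1 else 0) - signedCount R a w := by
  simp [signedCount, List.alternatingSum_cons]

theorem signedCount_eq_zero_of_notMem {a : α} {w : List α} (h : a ∉ w) :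
    signedCount R a w = 0 := by
  induction w with
  | nil => rfl
  | cons b w ih =>
    rw [List.mem_cons, not_or] at h
    rw [signedCount_cons, if_neg (Ne.symm h.1), ih h.2, sub_zero]

theorem signedCount_append (a : α) (u v : List α) :
    signedCount R a (u ++ v) = signedCount R a u + (-1) ^ u.length * signedCount R a v := by
  simp [signedCount, List.alternatingSum_append, zsmul_eq_mul]

theorem signedCount_append_cons_append_cons {a : α} {x y z : List α} (hx : a ∉ x) (hy : a ∉ y)
    (hz : a ∉ z) :
    signedCount R a (x ++ a :: (y ++ a :: z)) = (-1) ^ x.length * (1 - (-1) ^ y.length) := by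
  simp [signedCount_append, signedCount_cons, signedCount_eq_zero_of_notMem, hx, hy, hz]

theorem sum_signedCount (w : List α) {s : Finset α} (hs : ∀ b ∈ w, b ∈ s) :
    ∑ a ∈ s, signedCount R a w = if Even w.length then 0 else 1 := by
  induction w with
  | nil => simp [signedCount]
  | cons b w ih =>
    simp only [signedCount_cons, Finset.sum_sub_distrib, Finset.sum_ite_eq,
      if_pos (hs b List.mem_cons_self), ih fun c hc => hs c (List.mem_cons_of_mem b hc),
      List.length_cons, Nat.even_add_one]
    split_ifs <;> simp

end SignedCount

theorem signedCount_eq_of_count_eq_two {w : Word} {a : ℕ} (h : w.count a = 2) :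
    signedCount (ZMod 4) a w = if Odd (betweenWord w a).length then 2 else 0 := by
  obtain ⟨x, y, z, rfl, hx, hy, hz⟩ := List.exists_eq_append_cons_append_cons_of_count_eq_two h
  rw [signedCount_append_cons_append_cons hx hy hz, betweenWord_append_cons_append_cons hx hy]
  rcases Nat.even_or_odd y.length with hy | hy
  · simp [hy.neg_one_pow, Nat.not_odd_iff_even.2 hy]
  · rw [hy.neg_one_pow, if_pos hy]
    rcases neg_one_pow_eq_or (ZMod 4) x.length with h | h <;> rw [h] <;> decide

theorem IsGaussWord.length_eq {w : Word} (hw : IsGaussWord w) :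
    w.length = 2 * w.toFinset.card := by
  rw [← List.sum_toFinset_count_eq_length,
    Finset.sum_congr rfl fun a ha => hw a (List.mem_toFinset.1 ha), Finset.sum_const, smul_eq_mul,
    mul_comm]

theorem Nat.even_of_natCast_mul_two_eq_zero {n : ℕ} (h : (n : ZMod 4) * 2 = 0) : Even n := by
  have : 4 ∣ n * 2 := (ZMod.natCast_eq_zero_iff _ 4).1 (by exact_mod_cast h)
  exact Nat.even_iff.2 (by omega)

/-- in any Gauss word, the number of odd-parity letters is even. -/
theorem even_number_of_odd_parity_letters (w : Word) (hw : IsGaussWord w) :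
    Even ((w.toFinset.filter fun a => Odd (betweenWord w a).length).card) := by
  have hsum := sum_signedCount (R := ZMod 4) w (s := w.toFinset) fun b => List.mem_toFinset.2
  rw [if_pos (hw.length_eq ▸ even_two_mul _),
    Finset.sum_congr rfl fun a ha => signedCount_eq_of_count_eq_two (hw a (List.mem_toFinset.1 ha)),
    Finset.sum_ite, Finset.sum_const_zero, add_zero, Finset.sum_const, nsmul_eq_mul] at hsum
  exact Nat.even_of_natCast_mul_two_eq_zero hsum
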